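/- Every automorphism φ of an n-dimensional nilpotent evolution algebra E with maximal nilindex is upper triangular with diagonal entries φ_{ii} = α^{2^{i−1}} (where α = φ_{11} ≠ 0), and its only possible off-diagonal nonzero entries lie in the last column: φ(e_i) ∈ span{e_i, e_n} for all i. -/

import Mathlib

/-!
Let `tail e k` be the span of the `e j` with `k ≤ j`. Because the structure matrix is strictly upper
triangular with nonzero superdiagonal, `tail e (k + 1)` is spanned by the squares `e i * e i` with
`k ≤ i`; so a multiplicative `φ` preserves every `tail e k` and is upper triangular. Comparing the
`e (i + 1)`-coordinates of `φ (e i * e i) = φ (e i) * φ (e i)` gives `φ_{i+1,i+1} = φ_{ii} ^ 2`,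
comparing the `e (k + 1)`-coordinates of `0 = φ (e i) * φ (e k)` for `i < k` gives
`φ_{ik} φ_{kk} = 0`, and surjectivity forces `φ_{00} ≠ 0` (indices start at `0`).
-/

open Finset Module

namespace Module.Basis

variable {ι R M : Type*}

theorem exists_eq_repr_smul_add_smul [Semiring R] [AddCommMonoid M] [Module R M]
    (b : Basis ι R M) {x : M} {i w : ι} (h : ∀ j, j ≠ i → j ≠ w → b.repr x j = 0) :
    ∃ c : R, x = b.repr x i • b i + c • b w := by
  classical
  by_cases hiw : i = w
  · subst hiw
    refine ⟨0, b.ext_elem fun j => ?_⟩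
    by_cases hj : j = i
    · simp [hj]
    · simp [h j hj hj, Ne.symm hj]
  · refine ⟨b.repr x w, b.ext_elem fun j => ?_⟩
    by_cases hji : j = i
    · simp [hji, hiw]
    by_cases hjw : j = w
    · simp [hjw, Ne.symm hiw]
    · simp [h j hji hjw, Ne.symm hji, Ne.symm hjw]

theorem repr_map_eq_sum [Semiring R] [Fintype ι] [AddCommMonoid M] [Module R M] (b : Basis ι R M)
    (f : M →ₗ[R] M) (x : M) (m : ι) :
    b.repr (f x) m = ∑ i, b.repr x i * b.repr (f (b i)) m := by
  calc b.repr (f x) m = b.repr (f (∑ i, b.repr x i • b i)) m := by rw [b.sum_repr]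
    _ = _ := by
      simp only [map_sum, map_smul, Finsupp.coe_finsetSum, Finset.sum_apply, Finsupp.smul_apply,
        smul_eq_mul]

theorem repr_mul_eq_sum [CommSemiring R] [Fintype ι] [NonUnitalNonAssocSemiring M] [Module R M]
    [SMulCommClass R M M] [IsScalarTower R M M] (b : Basis ι R M)
    (hb : ∀ i j, i ≠ j → b i * b j = 0) (x y : M) (m : ι) :
    b.repr (x * y) m = ∑ i, b.repr x i * b.repr y i * b.repr (b i * b i) m := by
  have hxy : x * y = ∑ i, (b.repr x i * b.repr y i) • (b i * b i) := by
    conv_lhs => rw [← b.sum_repr x, ← b.sum_repr y]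
    rw [sum_mul_sum]
    refine sum_congr rfl fun i _ => ?_
    rw [sum_eq_single i (fun j _ hj => by rw [smul_mul_smul_comm, hb i j hj.symm, smul_zero])
      (by simp), smul_mul_smul_comm]
  simp [hxy, mul_assoc]

end Module.Basis

namespace EvolutionAlgebra

section Tail

variable {R M : Type*} [Semiring R] [AddCommMonoid M] [Module R M] {n : ℕ}

def tail (e : Basis (Fin n) R M) (k : ℕ) : Submodule R M :=
  Submodule.span R (e '' {j | k ≤ (j : ℕ)})

variable {e : Basis (Fin n) R M} {k : ℕ}

theorem mem_tail {x : M} : x ∈ tail e k ↔ ∀ j : Fin n, (j : ℕ) < k → e.repr x j = 0 := by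
  rw [tail, Basis.mem_span_image]
  refine ⟨fun h j hj => ?_, fun h j hj => ?_⟩
  · by_contra hne
    exact absurd (h (Finsupp.mem_support_iff.2 hne)) (by simpa using hj)
  · by_contra hkj
    exact Finsupp.mem_support_iff.1 hj (h j (by simpa using hkj))

theorem tail_le_iff {p : Submodule R M} : tail e k ≤ p ↔ ∀ j : Fin n, k ≤ (j : ℕ) → e j ∈ p := by
  simp [tail, Submodule.span_le, Set.subset_def]

theorem basis_mem_tail {j : Fin n} (hj : k ≤ (j : ℕ)) : e j ∈ tail e k :=
  Submodule.subset_span ⟨j, hj, rfl⟩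

end Tail

variable {K E : Type*} [Field K] [NonUnitalNonAssocRing E] [Module K E] {n : ℕ}

/-- The natural basis of a nilpotent evolution algebra of maximal nilindex, described by the
triangular shape of its structure matrix. -/
structure IsMaxNilindexBasis (e : Basis (Fin n) K E) : Prop where
  mul_eq_zero_of_ne : ∀ i j, i ≠ j → e i * e j = 0
  repr_sq_eq_zero_of_le : ∀ i m, m ≤ i → e.repr (e i * e i) m = 0
  repr_sq_ne_zero_of_eq_succ : ∀ i j : Fin n, (j : ℕ) = i + 1 → e.repr (e i * e i) j ≠ 0

theorem isMaxNilindexBasis_of_sq_eq_sum (e : Basis (Fin n) K E) (a : Fin n → Fin n → K)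
    (hzero : ∀ i j : Fin n, i ≠ j → e i * e j = 0)
    (hsq : ∀ i : Fin n, e i * e i = ∑ j ∈ univ.filter (fun j => i < j), a i j • e j)
    (hne : ∀ i : Fin n, ∀ hi : (i : ℕ) + 1 < n, a i ⟨(i : ℕ) + 1, hi⟩ ≠ 0) :
    IsMaxNilindexBasis e := by
  have hrepr : ∀ i m, e.repr (e i * e i) m = if i < m then a i m else 0 := fun i m => by
    simp [hsq i, Finsupp.single_apply]
  refine ⟨hzero, fun i m hmi => by simp [hrepr, hmi.not_gt], fun i j hij => ?_⟩
  have hj : j = ⟨i + 1, hij ▸ j.2⟩ := Fin.ext hij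
  simpa [hrepr, Fin.lt_def, hij, ← hj] using hne i (hij ▸ j.2)

namespace IsMaxNilindexBasis

variable {e : Basis (Fin n) K E}

theorem sq_sub_smul_mem_tail (he : IsMaxNilindexBasis e) {i j : Fin n} (hij : (j : ℕ) = i + 1) :
    e i * e i - e.repr (e i * e i) j • e j ∈ tail e (j + 1) := by
  rw [mem_tail]
  intro m hm
  rcases eq_or_ne m j with rfl | hmj
  · simp
  · have hmi : m ≤ i := by rw [Fin.le_def]; rw [Ne, Fin.ext_iff] at hmj; omega
    simp [he.repr_sq_eq_zero_of_le i m hmi, Ne.symm hmj]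

theorem tail_succ_le_span_sq (he : IsMaxNilindexBasis e) (k : ℕ) :
    tail e (k + 1) ≤ Submodule.span K ((fun i => e i * e i) '' {i | k ≤ (i : ℕ)}) := by
  set S := Submodule.span K ((fun i => e i * e i) '' {i | k ≤ (i : ℕ)})
  rw [tail_le_iff]
  intro j
  induction j using WellFoundedGT.induction with
  | _ j ih =>
    intro hj
    set i : Fin n := ⟨j - 1, by omega⟩
    have hij : (j : ℕ) = i + 1 := by simp only [i]; omega
    have hsq : e i * e i ∈ S :=
      Submodule.subset_span ⟨i, by simp only [i, Set.mem_ofPred_eq]; omega, rfl⟩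
    have hrest : e i * e i - e.repr (e i * e i) j • e j ∈ S :=
      tail_le_iff.2 (fun l hl => ih l (by rw [Fin.lt_def]; omega) (by omega))
        (he.sq_sub_smul_mem_tail hij)
    have := S.smul_mem (e.repr (e i * e i) j)⁻¹ (S.sub_mem hsq hrest)
    rwa [sub_sub_cancel, smul_smul, inv_mul_cancel₀ (he.repr_sq_ne_zero_of_eq_succ i j hij),
      one_smul] at this

variable [SMulCommClass K E E] [IsScalarTower K E E]

theorem mul_mem_tail_succ (he : IsMaxNilindexBasis e) {k : ℕ} {x : E} (hx : x ∈ tail e k)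
    (y : E) : x * y ∈ tail e (k + 1) := by
  rw [mem_tail] at hx ⊢
  intro m hm
  rw [e.repr_mul_eq_sum he.mul_eq_zero_of_ne]
  refine sum_eq_zero fun i _ => ?_
  rcases lt_or_ge (i : ℕ) k with hik | hki
  · simp [hx i hik]
  · rw [he.repr_sq_eq_zero_of_le i m (by rw [Fin.le_def]; omega), mul_zero]

theorem repr_mul_of_mem_tail (he : IsMaxNilindexBasis e) {i j : Fin n} (hij : (j : ℕ) = i + 1)
    (x : E) {y : E} (hy : y ∈ tail e i) :
    e.repr (x * y) j = e.repr x i * e.repr y i * e.repr (e i * e i) j := by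
  rw [e.repr_mul_eq_sum he.mul_eq_zero_of_ne, sum_eq_single i _ (by simp)]
  intro l _ hli
  rcases lt_or_gt_of_ne hli with h | h
  · rw [mem_tail.1 hy l h, mul_zero, zero_mul]
  · rw [he.repr_sq_eq_zero_of_le l j (by rw [Fin.le_def]; rw [Fin.lt_def] at h; omega), mul_zero]

variable {φ : E →ₗ[K] E}

theorem map_mem_tail (he : IsMaxNilindexBasis e) (hmul : ∀ x y, φ (x * y) = φ x * φ y) {k : ℕ}
    {x : E} (hx : x ∈ tail e k) : φ x ∈ tail e k := by
  induction k generalizing x with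
  | zero => exact mem_tail.2 fun j hj => absurd hj (Nat.not_lt_zero _)
  | succ k ih =>
    have hsq : Submodule.span K ((fun i => e i * e i) '' {i | k ≤ (i : ℕ)}) ≤
        (tail e (k + 1)).comap φ := by
      rw [Submodule.span_le]
      rintro _ ⟨i, hi, rfl⟩
      rw [SetLike.mem_coe, Submodule.mem_comap, hmul]
      exact he.mul_mem_tail_succ (ih (basis_mem_tail hi)) _
    exact hsq (he.tail_succ_le_span_sq k hx)

theorem repr_map_basis_eq_zero_of_lt (he : IsMaxNilindexBasis e)
    (hmul : ∀ x y, φ (x * y) = φ x * φ y) {i j : Fin n} (hji : j < i) :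
    e.repr (φ (e i)) j = 0 :=
  mem_tail.1 (he.map_mem_tail hmul (basis_mem_tail le_rfl)) j hji

theorem repr_map_basis_succ (he : IsMaxNilindexBasis e) (hmul : ∀ x y, φ (x * y) = φ x * φ y)
    {i j : Fin n} (hij : (j : ℕ) = i + 1) :
    e.repr (φ (e j)) j = e.repr (φ (e i)) i ^ 2 := by
  have hsq : e.repr (φ (e i * e i)) j = e.repr (φ (e i)) i ^ 2 * e.repr (e i * e i) j := by
    rw [hmul, he.repr_mul_of_mem_tail hij _ (he.map_mem_tail hmul (basis_mem_tail le_rfl))]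
    ring
  have hmap : e.repr (φ (e i * e i)) j = e.repr (e i * e i) j * e.repr (φ (e j)) j := by
    rw [e.repr_map_eq_sum, sum_eq_single j _ (by simp)]
    intro l _ hlj
    rcases lt_or_gt_of_ne hlj with h | h
    · rw [he.repr_sq_eq_zero_of_le i l (by rw [Fin.le_def]; rw [Fin.lt_def] at h; omega), zero_mul]
    · rw [he.repr_map_basis_eq_zero_of_lt hmul h, mul_zero]
  refine mul_left_cancel₀ (he.repr_sq_ne_zero_of_eq_succ i j hij) ?_
  linear_combination hmap.symm.trans hsq

theorem repr_map_basis_self_eq_pow (he : IsMaxNilindexBasis e)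
    (hmul : ∀ x y, φ (x * y) = φ x * φ y) (h0 : 0 < n) (i : Fin n) :
    e.repr (φ (e i)) i = e.repr (φ (e ⟨0, h0⟩)) ⟨0, h0⟩ ^ 2 ^ (i : ℕ) := by
  obtain ⟨m, hm⟩ := i
  induction m with
  | zero => simp
  | succ m ih =>
    rw [he.repr_map_basis_succ hmul (i := ⟨m, by omega⟩) rfl, ih (by omega), ← pow_mul, pow_succ]

theorem repr_map_basis_zero_ne_zero (he : IsMaxNilindexBasis e)
    (hmul : ∀ x y, φ (x * y) = φ x * φ y) (hφ : Function.Surjective φ) (h0 : 0 < n) :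
    e.repr (φ (e ⟨0, h0⟩)) ⟨0, h0⟩ ≠ 0 := by
  intro hα
  obtain ⟨x, hx⟩ := hφ (e ⟨0, h0⟩)
  have h := congrArg (fun v => e.repr v ⟨0, h0⟩) hx
  rw [e.repr_map_eq_sum, sum_eq_single ⟨0, h0⟩ _ (by simp), hα, mul_zero, e.repr_self,
    Finsupp.single_eq_same] at h
  · exact zero_ne_one h
  · intro i _ hi
    rw [he.repr_map_basis_eq_zero_of_lt hmul (Nat.pos_of_ne_zero (Fin.val_ne_of_ne hi)),
      mul_zero]

theorem repr_map_basis_self_ne_zero (he : IsMaxNilindexBasis e)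
    (hmul : ∀ x y, φ (x * y) = φ x * φ y) (hφ : Function.Surjective φ) (i : Fin n) :
    e.repr (φ (e i)) i ≠ 0 := by
  rw [he.repr_map_basis_self_eq_pow hmul i.pos]
  exact pow_ne_zero _ (he.repr_map_basis_zero_ne_zero hmul hφ i.pos)

theorem repr_map_basis_eq_zero_of_lt_of_succ (he : IsMaxNilindexBasis e)
    (hmul : ∀ x y, φ (x * y) = φ x * φ y) (hφ : Function.Surjective φ) {i k j : Fin n}
    (hik : i < k) (hkj : (j : ℕ) = k + 1) :
    e.repr (φ (e i)) k = 0 := by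
  have h := congrArg (fun v => e.repr v j) (hmul (e i) (e k))
  simp only [he.mul_eq_zero_of_ne i k hik.ne, map_zero, Finsupp.zero_apply] at h
  rw [he.repr_mul_of_mem_tail hkj _ (he.map_mem_tail hmul (basis_mem_tail le_rfl))] at h
  simpa [he.repr_map_basis_self_ne_zero hmul hφ k, he.repr_sq_ne_zero_of_eq_succ k j hkj] using
    h.symm

theorem repr_map_basis_eq_zero (he : IsMaxNilindexBasis e) (hmul : ∀ x y, φ (x * y) = φ x * φ y)
    (hφ : Function.Surjective φ) {i j : Fin n} (hji : j ≠ i) (hj : (j : ℕ) + 1 < n) :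
    e.repr (φ (e i)) j = 0 := by
  rcases lt_or_gt_of_ne hji with h | h
  · exact he.repr_map_basis_eq_zero_of_lt hmul h
  · exact he.repr_map_basis_eq_zero_of_lt_of_succ hmul hφ h (j := ⟨j + 1, hj⟩) rfl

end IsMaxNilindexBasis

end EvolutionAlgebra

/-- every automorphism `φ` of an `n`-dimensional nilpotent evolution
algebra of maximal nilindex is upper triangular with diagonal entries
`φ_{ii} = α^{2^{i−1}}` (`α = φ_{11} ≠ 0`), and its only possible off-diagonal nonzero
entries lie in the last column: `φ(e_i) ∈ span{e_i, e_n}` for all `i`. -/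
theorem stmt17 {K E : Type*} [Field K] [NonUnitalNonAssocRing E]
    [Module K E] [SMulCommClass K E E] [IsScalarTower K E E]
    (n : ℕ) (hn : 2 ≤ n) (a : Fin n → Fin n → K) (e : Module.Basis (Fin n) K E)
    (hzero : ∀ i j : Fin n, i ≠ j → e i * e j = 0)
    (hsq : ∀ i : Fin n, e i * e i = ∑ j ∈ Finset.univ.filter (fun j => i < j), a i j • e j)
    (hne : ∀ i : Fin n, ∀ hi : (i : ℕ) + 1 < n, a i ⟨(i : ℕ) + 1, hi⟩ ≠ 0)
    (φ : E →ₗ[K] E) (hbij : Function.Bijective φ)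
    (hmul : ∀ x y : E, φ (x * y) = φ x * φ y) :
    ∃ α : K, α ≠ 0 ∧ α = e.repr (φ (e ⟨0, by omega⟩)) ⟨0, by omega⟩ ∧
      ∀ i : Fin n, ∃ c : K,
        φ (e i) = (α ^ 2 ^ (i : ℕ)) • e i + c • e ⟨n - 1, by omega⟩ := by
  have he := EvolutionAlgebra.isMaxNilindexBasis_of_sq_eq_sum e a hzero hsq hne
  refine ⟨_, he.repr_map_basis_zero_ne_zero hmul hbij.2 (by omega), rfl, fun i => ?_⟩
  rw [← he.repr_map_basis_self_eq_pow hmul (by omega) i]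
  refine e.exists_eq_repr_smul_add_smul fun j hji hjw =>
    he.repr_map_basis_eq_zero hmul hbij.2 hji ?_
  have : (j : ℕ) ≠ n - 1 := Fin.val_ne_of_ne hjw
  omega
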